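/- Let Λ be a finite 𝔽_q-subspace of a field L containing 𝔽_q, of dimension n with basis ω₁,...,ωₙ. Then the product of all nonzero elements of Λ equals (-1)^n · M(ω₁,...,ωₙ)^{q-1}. -/

import Mathlib

/-!
Expanding the Moore determinant `M(ω₁, …, ωₙ, X)` along its last row gives a `q`-polynomial
`P = ∑ⱼ cⱼ X^{q^j}`. Its evaluation is `𝔽_q`-linear and vanishes at every `ωᵢ` (two equal rows),
hence on all of `Λ`; as `deg P ≤ q^n = |Λ|` and `cₙ = M(ω)`, we get `P = M(ω) ∏_{λ ∈ Λ} (X - λ)`.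
Evaluating this identity at a new independent vector shows `M(ω) ≠ 0` by induction on `n`.
Comparing coefficients of `X`: the cofactor `c₀` is `(-1)ⁿ M(ω)^q`, its minor being the Frobenius
image of `M(ω)`, while on the right we get `M(ω) ∏_{λ ≠ 0} (-λ) = M(ω) ∏_{λ ≠ 0} λ`, since
`λ ↦ -λ` permutes `Λ ∖ {0}`.
-/

open Polynomial Matrix Finset

theorem Polynomial.eq_C_coeff_mul_prod_X_sub_C {R : Type*} [CommRing R] [IsDomain R]
    {f : R[X]} {s : Finset R} (hdeg : f.natDegree ≤ #s) (hroot : ∀ a ∈ s, f.eval a = 0) :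
    f = C (f.coeff #s) * ∏ a ∈ s, (X - C a) := by
  rcases eq_or_ne f 0 with rfl | hf
  · simp
  have hle : s.val ≤ f.roots :=
    (Multiset.le_iff_subset s.nodup).2 fun a ha => (mem_roots hf).2 (hroot a ha)
  have hroots : s.val = f.roots :=
    Multiset.eq_of_le_of_card_le hle ((card_roots' f).trans hdeg)
  have hcard : f.roots.card = f.natDegree :=
    le_antisymm (card_roots' f) (hroots ▸ hdeg)
  conv_lhs => rw [← C_leadingCoeff_mul_prod_multiset_X_sub_C hcard]
  rw [leadingCoeff, ← hcard, ← hroots, prod_eq_multiset_prod]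
  rfl

theorem Polynomial.coeff_one_prod_X_sub_C {R : Type*} [CommRing R] [DecidableEq R]
    {s : Finset R} (h0 : (0 : R) ∈ s) :
    (∏ a ∈ s, (X - C a)).coeff 1 = ∏ a ∈ s.erase 0, -a := by
  rw [← mul_prod_erase s _ h0, map_zero, sub_zero, coeff_X_mul, coeff_zero_eq_eval_zero,
    eval_prod]
  simp only [eval_sub, eval_X, eval_C, zero_sub]

theorem Finset.prod_neg_eq_prod_of_neg_mem {R : Type*} [CommRing R] {s : Finset R}
    (hs : ∀ a ∈ s, -a ∈ s) : ∏ a ∈ s, -a = ∏ a ∈ s, a :=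
  prod_nbij' (- ·) (- ·) hs hs (by simp) (by simp) (by simp)

theorem card_eq_card_pow_of_coe_eq_span {F V : Type*} [Field F] [Fintype F] [AddCommGroup V]
    [Module F V] {n : ℕ} {v : Fin n → V} (hv : LinearIndependent F v) {s : Finset V}
    (hs : (s : Set V) = Submodule.span F (Set.range v)) : #s = Fintype.card F ^ n := by
  have := Module.Finite.span_of_finite F (Set.finite_range v)
  rw [← Set.ncard_coe_finset, hs, ← Nat.card_coe_set_eq, SetLike.coe_sort_coe,
    Module.natCard_eq_pow_finrank (K := F), finrank_span_eq_card hv, Fintype.card_fin,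
    Nat.card_eq_fintype_card]

section CommRing

variable {R : Type*} [CommRing R] (q : ℕ)

def mooreMatrix {n : ℕ} (v : Fin n → R) : Matrix (Fin n) (Fin n) R :=
  Matrix.of fun i j => v i ^ q ^ (j : ℕ)

noncomputable def linearizedPoly {m : ℕ} (b : Fin m → R) : R[X] :=
  ∑ j, C (b j) * X ^ q ^ (j : ℕ)

/-- The cofactor of the entry `x ^ q ^ j` in the last row of `mooreMatrix q (Fin.snoc v x)`. -/
def mooreCofactor {n : ℕ} (v : Fin n → R) (j : Fin (n + 1)) : R :=
  (-1) ^ (n + j : ℕ) * (Matrix.of fun i k : Fin n => v i ^ q ^ (j.succAbove k : ℕ)).det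

variable {q}

@[simp]
theorem eval_linearizedPoly {m : ℕ} (b : Fin m → R) (x : R) :
    (linearizedPoly q b).eval x = ∑ j, b j * x ^ q ^ (j : ℕ) := by
  simp [linearizedPoly, eval_finsetSum]

theorem coeff_linearizedPoly_pow (hq : 1 < q) {m : ℕ} (b : Fin m → R) (j : Fin m) :
    (linearizedPoly q b).coeff (q ^ (j : ℕ)) = b j := by
  rw [linearizedPoly, finsetSum_coeff, sum_eq_single j]
  · simp
  · intro k _ hkj
    rw [coeff_C_mul_X_pow, if_neg fun h => hkj (Fin.ext (Nat.pow_right_injective hq h.symm))]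
  · simp

theorem natDegree_linearizedPoly_le (hq : 0 < q) {n : ℕ} (b : Fin (n + 1) → R) :
    (linearizedPoly q b).natDegree ≤ q ^ n :=
  natDegree_sum_le_of_forall_le _ _ fun j _ =>
    (natDegree_C_mul_le _ _).trans <| (natDegree_X_pow_le _).trans <|
      Nat.pow_le_pow_right hq (Nat.lt_succ_iff.1 j.2)

theorem det_mooreMatrix_snoc {n : ℕ} (v : Fin n → R) (x : R) :
    (mooreMatrix q (Fin.snoc v x : Fin (n + 1) → R)).det =
      (linearizedPoly q (mooreCofactor q v)).eval x := by
  rw [det_succ_row _ (Fin.last n), eval_linearizedPoly]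
  refine sum_congr rfl fun j _ => ?_
  simp only [Fin.val_last, mooreMatrix, of_apply, Fin.snoc_last, submatrix, Fin.succAbove_last,
    Fin.snoc_castSucc, mooreCofactor]
  ring

theorem mooreCofactor_last {n : ℕ} (v : Fin n → R) :
    mooreCofactor q v (Fin.last n) = (mooreMatrix q v).det := by
  simp [mooreCofactor, mooreMatrix, ← two_mul, pow_mul]

end CommRing

section FiniteField

variable {F R : Type*} [Field F] [Fintype F] [CommRing R] [Algebra F R]

theorem frobeniusAlgHom_pow_apply (j : ℕ) (x : R) :
    ((FiniteField.frobeniusAlgHom F R).toLinearMap ^ j) x = x ^ Fintype.card F ^ j := by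
  induction j with
  | zero => simp
  | succ j ih => rw [pow_succ', Module.End.mul_apply, ih]; simp [← pow_mul, pow_succ]

theorem mooreCofactor_zero {n : ℕ} (v : Fin n → R) :
    mooreCofactor (Fintype.card F) v 0 =
      (-1) ^ n * (mooreMatrix (Fintype.card F) v).det ^ Fintype.card F := by
  rw [mooreCofactor, Fin.val_zero, add_zero, ← FiniteField.frobeniusAlgHom_apply F R,
    AlgHom.map_det]
  congr 2
  ext i k
  simp [mooreMatrix, ← pow_mul, pow_succ]

theorem eval_linearizedPoly_eq_zero_of_mem_span {ι : Type*} {m : ℕ} (b : Fin m → R)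
    {v : ι → R} (hv : ∀ i, (linearizedPoly (Fintype.card F) b).eval (v i) = 0) {x : R}
    (hx : x ∈ Submodule.span F (Set.range v)) :
    (linearizedPoly (Fintype.card F) b).eval x = 0 := by
  let φ : Module.End F R := ∑ j, b j • (FiniteField.frobeniusAlgHom F R).toLinearMap ^ (j : ℕ)
  have hφ : ∀ y, φ y = (linearizedPoly (Fintype.card F) b).eval y := fun y => by
    simp [φ, frobeniusAlgHom_pow_apply]
  have hle : Submodule.span F (Set.range v) ≤ LinearMap.ker φ :=
    Submodule.span_le.2 <| Set.range_subset_iff.2 fun i => by simp [hφ, hv]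
  rw [← hφ]
  exact hle hx

theorem eval_linearizedPoly_mooreCofactor_eq_zero {n : ℕ} (v : Fin n → R) {x : R}
    (hx : x ∈ Submodule.span F (Set.range v)) :
    (linearizedPoly (Fintype.card F) (mooreCofactor (Fintype.card F) v)).eval x = 0 := by
  refine eval_linearizedPoly_eq_zero_of_mem_span _ (fun i => ?_) hx
  rw [← det_mooreMatrix_snoc]
  refine det_zero_of_row_eq (Fin.castSucc_lt_last i).ne ?_
  ext j
  simp [mooreMatrix]

end FiniteField

section Field

variable {F L : Type*} [Field F] [Fintype F] [Field L] [Algebra F L]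

theorem linearizedPoly_mooreCofactor_eq {n : ℕ} {v : Fin n → L} (hv : LinearIndependent F v)
    {s : Finset L} (hs : (s : Set L) = Submodule.span F (Set.range v)) :
    linearizedPoly (Fintype.card F) (mooreCofactor (Fintype.card F) v) =
      C (mooreMatrix (Fintype.card F) v).det * ∏ a ∈ s, (X - C a) := by
  have hcard := card_eq_card_pow_of_coe_eq_span hv hs
  convert eq_C_coeff_mul_prod_X_sub_C (s := s) ?_ fun a ha => ?_ using 3
  · simpa [hcard, mooreCofactor_last] using (coeff_linearizedPoly_pow Fintype.one_lt_card
      (mooreCofactor (Fintype.card F) v) (Fin.last n)).symm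
  · exact hcard ▸ natDegree_linearizedPoly_le Fintype.card_pos _
  · exact eval_linearizedPoly_mooreCofactor_eq_zero v (by rw [← SetLike.mem_coe, ← hs]; exact ha)

theorem det_mooreMatrix_ne_zero {n : ℕ} {v : Fin n → L} (hv : LinearIndependent F v) :
    (mooreMatrix (Fintype.card F) v).det ≠ 0 := by
  induction n with
  | zero => simp
  | succ n ih =>
    rw [← Fin.snoc_init_self v] at hv ⊢
    obtain ⟨hinit, hlast⟩ := linearIndependent_finSnoc.1 hv
    obtain ⟨s, hs⟩ : ∃ s : Finset L, (s : Set L) = Submodule.span F (Set.range (Fin.init v)) :=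
      have := Module.Finite.span_of_finite F (Set.finite_range (Fin.init v))
      have := Module.finite_of_finite F (M := Submodule.span F (Set.range (Fin.init v)))
      ⟨(Set.toFinite (Submodule.span F (Set.range (Fin.init v)) : Set L)).toFinset, by simp⟩
    rw [det_mooreMatrix_snoc, linearizedPoly_mooreCofactor_eq hinit hs, eval_mul, eval_C,
      eval_prod]
    refine mul_ne_zero (ih hinit) (prod_ne_zero_iff.2 fun a ha => ?_)
    rw [eval_sub, eval_X, eval_C, sub_ne_zero]
    rintro rfl
    exact hlast (by rw [← SetLike.mem_coe, ← hs]; exact ha)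

theorem neg_one_pow_mul_det_mooreMatrix_pow_eq [DecidableEq L] {n : ℕ} {v : Fin n → L}
    (hv : LinearIndependent F v) {s : Finset L}
    (hs : (s : Set L) = Submodule.span F (Set.range v)) :
    (-1) ^ n * (mooreMatrix (Fintype.card F) v).det ^ Fintype.card F =
      (mooreMatrix (Fintype.card F) v).det * ∏ a ∈ s.erase 0, a := by
  have hmem : ∀ {x}, x ∈ s ↔ x ∈ Submodule.span F (Set.range v) := by
    intro x; rw [← Finset.mem_coe, hs, SetLike.mem_coe]
  have h0 : (0 : L) ∈ s := hmem.2 (Submodule.zero_mem _)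
  have hneg : ∀ a ∈ s.erase 0, -a ∈ s.erase 0 := fun a ha =>
    mem_erase.2 ⟨neg_ne_zero.2 (ne_of_mem_erase ha),
      hmem.2 (neg_mem (hmem.1 (mem_of_mem_erase ha)))⟩
  have h := coeff_linearizedPoly_pow (Fintype.one_lt_card (α := F))
    (mooreCofactor (Fintype.card F) v) 0
  rwa [Fin.val_zero, pow_zero, mooreCofactor_zero, linearizedPoly_mooreCofactor_eq hv hs,
    coeff_C_mul, coeff_one_prod_X_sub_C h0, prod_neg_eq_prod_of_neg_mem hneg, eq_comm] at h

end Field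

/-- If `Λ` is an `n`-dimensional `𝔽_q`-subspace of a field `L ⊇ 𝔽_q` with
basis `ω₁,…,ωₙ`, then the product of all nonzero elements of `Λ` equals
`(-1)^n · M(ω₁,…,ωₙ)^{q-1}`, `M` being the Moore determinant. -/
theorem prod_nonzero_eq_neg_one_pow_mul_moore_pow
    {F L : Type*} [Field F] [Fintype F] [Field L] [Algebra F L] [DecidableEq L]
    (q : ℕ) (hq : Fintype.card F = q) (n : ℕ) (ω : Fin n → L)
    (hind : LinearIndependent F ω)
    (Λ : Finset L)
    (hΛ : (Λ : Set L) = (Submodule.span F (Set.range ω) : Set L)) :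
    ∏ l ∈ Λ.erase 0, l =
      (-1 : L) ^ n *
        Matrix.det (Matrix.of fun i j : Fin n => ω i ^ q ^ (j : ℕ)) ^ (q - 1) := by
  subst hq
  have h := neg_one_pow_mul_det_mooreMatrix_pow_eq hind hΛ
  rw [← mul_pow_sub_one Fintype.card_ne_zero, mul_left_comm] at h
  exact (mul_left_cancel₀ (det_mooreMatrix_ne_zero hind) h).symm
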